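/- Let U and V be positive definite matrices. Then ‖U^{−1/2} − V^{−1/2}‖ ≤ ‖U^{−1} − V^{−1}‖ / σ_min(V^{−1/2}), where ‖·‖ is the operator norm and σ_min denotes the smallest singular value. -/

import Mathlib

section OldSqrt

open scoped ComplexOrder

/-- The square root of a positive semidefinite matrix, as defined in the older Mathlib
(`Matrix.PosSemidef.sqrt`, since removed). -/
noncomputable def Matrix.PosSemidef.sqrt {n : Type*} {𝕜 : Type*} [Fintype n] [RCLike 𝕜]
    [DecidableEq n] {A : Matrix n n 𝕜} (hA : A.PosSemidef) : Matrix n n 𝕜 :=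
  hA.1.eigenvectorUnitary.1 * Matrix.diagonal ((↑) ∘ (√·) ∘ hA.1.eigenvalues) *
    (star hA.1.eigenvectorUnitary : Matrix n n 𝕜)

theorem Matrix.PosSemidef.posSemidef_sqrt {n : Type*} {𝕜 : Type*} [Fintype n] [RCLike 𝕜]
    [DecidableEq n] {A : Matrix n n 𝕜} (hA : A.PosSemidef) : Matrix.PosSemidef hA.sqrt := by
  unfold Matrix.PosSemidef.sqrt
  apply Matrix.PosSemidef.mul_mul_conjTranspose_same
  refine Matrix.posSemidef_diagonal_iff.mpr fun i ↦ ?_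
  rw [Function.comp_apply, RCLike.nonneg_iff]
  constructor
  · simp only [Function.comp_apply, RCLike.ofReal_re]; exact Real.sqrt_nonneg _
  · simp only [Function.comp_apply, RCLike.ofReal_im]

end OldSqrt

open Matrix

section aux

variable {n : Type} [Fintype n] [DecidableEq n]

private lemma real_conjTranspose (M : Matrix n n ℝ) : Mᴴ = Mᵀ := by
  ext i j; simp [conjTranspose_apply]

private lemma dot_symm {M : Matrix n n ℝ} (hM : M.IsHermitian) (u w : n → ℝ) :
    u ⬝ᵥ (M *ᵥ w) = (M *ᵥ u) ⬝ᵥ w := by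
  rw [dotProduct_mulVec, ← mulVec_transpose, ← real_conjTranspose, hM.eq]

private lemma inner_symm_dot (u w : n → ℝ) :
    (inner ℝ ((WithLp.equiv 2 (n → ℝ)).symm u) ((WithLp.equiv 2 (n → ℝ)).symm w) : ℝ) =
      u ⬝ᵥ w := by
  simp [PiLp.inner_apply, RCLike.inner_apply, dotProduct, mul_comm]

private lemma toEuclideanCLM_apply' (M : Matrix n n ℝ) (x : EuclideanSpace ℝ n) :
    toEuclideanCLM (𝕜 := ℝ) M x =
      (WithLp.equiv 2 (n → ℝ)).symm (M *ᵥ WithLp.equiv 2 (n → ℝ) x) := by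
  conv_lhs => rw [← (WithLp.equiv 2 (n → ℝ)).symm_apply_apply x]
  rfl

private lemma norm_sq_eq_sum_repr {M : Matrix n n ℝ} (hM : M.IsHermitian)
    (y : EuclideanSpace ℝ n) :
    ‖y‖ ^ 2 = ∑ i, (hM.eigenvectorBasis.repr y i) ^ 2 := by
  have h0 : ‖y‖ = ‖hM.eigenvectorBasis.repr y‖ := (hM.eigenvectorBasis.repr.norm_map y).symm
  rw [h0, EuclideanSpace.norm_eq, Real.sq_sqrt (by positivity)]
  simp [Real.norm_eq_abs, sq_abs]

private lemma opNorm_le_of_eigen {M : Matrix n n ℝ} (hM : M.IsHermitian) {c : ℝ}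
    (hc : 0 ≤ c) (h : ∀ i, |hM.eigenvalues i| ≤ c) :
    ‖toEuclideanCLM (𝕜 := ℝ) M‖ ≤ c := by
  refine ContinuousLinearMap.opNorm_le_bound _ hc fun x => ?_
  set b := hM.eigenvectorBasis with hb
  set T := toEuclideanCLM (𝕜 := ℝ) M with hT
  have hr : ∀ i, b.repr (T x) i = hM.eigenvalues i * b.repr x i := by
    intro i
    rw [b.repr_apply_apply, b.repr_apply_apply]
    have hbi : (WithLp.equiv 2 (n → ℝ)).symm ⇑(b i) = b i := rfl
    calc (inner ℝ (b i) (T x) : ℝ)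
        = (inner ℝ ((WithLp.equiv 2 (n → ℝ)).symm ⇑(b i))
            ((WithLp.equiv 2 (n → ℝ)).symm (M *ᵥ WithLp.equiv 2 (n → ℝ) x)) : ℝ) := by
          rw [hbi, hT, toEuclideanCLM_apply']
      _ = ⇑(b i) ⬝ᵥ (M *ᵥ WithLp.equiv 2 (n → ℝ) x) := inner_symm_dot _ _
      _ = (M *ᵥ ⇑(b i)) ⬝ᵥ (WithLp.equiv 2 (n → ℝ) x) := dot_symm hM _ _
      _ = (hM.eigenvalues i • ⇑(b i)) ⬝ᵥ (WithLp.equiv 2 (n → ℝ) x) := by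
          rw [hM.mulVec_eigenvectorBasis]
      _ = hM.eigenvalues i * (⇑(b i) ⬝ᵥ (WithLp.equiv 2 (n → ℝ) x)) := smul_dotProduct _ _ _
      _ = hM.eigenvalues i * (inner ℝ (b i) x : ℝ) := by
          rw [← inner_symm_dot, hbi, (WithLp.equiv 2 (n → ℝ)).symm_apply_apply]
  have h2 : ‖T x‖ ^ 2 ≤ (c * ‖x‖) ^ 2 := by
    rw [norm_sq_eq_sum_repr hM (T x), mul_pow, norm_sq_eq_sum_repr hM x, Finset.mul_sum]
    refine Finset.sum_le_sum fun i _ => ?_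
    rw [hr i, mul_pow]
    have h4 : hM.eigenvalues i ^ 2 ≤ c ^ 2 := by
      nlinarith [sq_abs (hM.eigenvalues i), h i, abs_nonneg (hM.eigenvalues i)]
    exact mul_le_mul_of_nonneg_right h4 (sq_nonneg _)
  nlinarith [norm_nonneg (T x), mul_nonneg hc (norm_nonneg x)]

private lemma iInf_le_dot [Nonempty n] {M : Matrix n n ℝ} (hM : M.PosSemidef) (v : n → ℝ) :
    (⨅ i, hM.1.eigenvalues i) * (v ⬝ᵥ v) ≤ v ⬝ᵥ (M *ᵥ v) := by
  set c := ⨅ i, hM.1.eigenvalues i with hc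
  have hle : ∀ i, c ≤ hM.1.eigenvalues i := fun i =>
    ciInf_le (Finite.bddBelow_range _) i
  have hdiag : Matrix.PosSemidef (diagonal (fun i => hM.1.eigenvalues i - c) : Matrix n n ℝ) :=
    posSemidef_diagonal_iff.mpr fun i => sub_nonneg.mpr (hle i)
  have h2 := hdiag.mul_mul_conjTranspose_same (hM.1.eigenvectorUnitary : Matrix n n ℝ)
  have hd : (diagonal (fun i => hM.1.eigenvalues i - c) : Matrix n n ℝ) =
      diagonal (RCLike.ofReal ∘ hM.1.eigenvalues) - c • 1 := by
    ext i j
    rcases eq_or_ne i j with rfl | hij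
    · simp [diagonal_apply_eq, Matrix.one_apply, Matrix.smul_apply]
    · simp [diagonal_apply_ne _ hij, Matrix.one_apply_ne hij, Matrix.smul_apply]
  have hUU : (hM.1.eigenvectorUnitary : Matrix n n ℝ) *
      (hM.1.eigenvectorUnitary : Matrix n n ℝ)ᴴ = 1 := by
    rw [← Matrix.star_eq_conjTranspose]
    exact (Matrix.mem_unitaryGroup_iff).mp (hM.1.eigenvectorUnitary).2
  have heq : (hM.1.eigenvectorUnitary : Matrix n n ℝ) *
      (diagonal (fun i => hM.1.eigenvalues i - c)) *
      (hM.1.eigenvectorUnitary : Matrix n n ℝ)ᴴ = M - c • 1 := by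
    rw [hd, mul_sub, sub_mul, Matrix.mul_smul, Matrix.smul_mul, mul_one, hUU]
    congr 1
    conv_rhs => rw [hM.1.spectral_theorem]
    rw [Unitary.conjStarAlgAut_apply, Matrix.star_eq_conjTranspose]
  rw [heq] at h2
  have h3 := h2.dotProduct_mulVec_nonneg v
  rw [star_trivial, sub_mulVec, dotProduct_sub, smul_mulVec, one_mulVec,
    dotProduct_smul, smul_eq_mul] at h3
  linarith

private lemma sqrt_mul_self' {A : Matrix n n ℝ} (hA : A.PosSemidef) : hA.sqrt * hA.sqrt = A := by
  unfold Matrix.PosSemidef.sqrt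
  have hu : (star hA.1.eigenvectorUnitary : Matrix n n ℝ) * hA.1.eigenvectorUnitary = 1 :=
    (Matrix.mem_unitaryGroup_iff').mp hA.1.eigenvectorUnitary.2
  conv_rhs => rw [hA.1.spectral_theorem, Unitary.conjStarAlgAut_apply]
  simp only [mul_assoc]
  rw [← mul_assoc (star _ : Matrix n n ℝ) _ _, hu, one_mul, ← mul_assoc (diagonal _),
    diagonal_mul_diagonal]
  congr 3
  ext i
  simp [Real.mul_self_sqrt (hA.eigenvalues_nonneg i)]

private lemma posDef_sqrt {W : Matrix n n ℝ} (hW : W.PosDef) : hW.posSemidef.sqrt.PosDef := by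
  set S := hW.posSemidef.sqrt with hS
  have hSpsd : S.PosSemidef := hW.posSemidef.posSemidef_sqrt
  refine posDef_iff_dotProduct_mulVec.mpr ⟨hSpsd.1, fun ⦃x⦄ hx => ?_⟩
  rcases (hSpsd.dotProduct_mulVec_nonneg x).lt_or_eq with h | h
  · exact h
  · exfalso
    have h0 : S *ᵥ x = 0 := (hSpsd.dotProduct_mulVec_zero_iff x).mp h.symm
    have hW0 : W *ᵥ x = 0 := by
      rw [← sqrt_mul_self' hW.posSemidef, ← hS, ← mulVec_mulVec, h0, mulVec_zero]
    have := hW.dotProduct_mulVec_pos hx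
    rw [hW0, dotProduct_zero] at this
    exact lt_irrefl _ this

end aux

/-- For positive definite matrices `U, V`,
`‖U^{-1/2} − V^{-1/2}‖ ≤ ‖U⁻¹ − V⁻¹‖ / σ_min(V^{-1/2})`, where `σ_min` is the smallest
singular value (for a positive semidefinite matrix, its smallest eigenvalue). -/
theorem inv_sqrt_perturbation {n : Type} [Fintype n] [DecidableEq n] [Nonempty n]
    (U V : Matrix n n ℝ) (hU : U.PosDef) (hV : V.PosDef) :
    ‖Matrix.toEuclideanCLM (𝕜 := ℝ) (hU.inv.posSemidef.sqrt - hV.inv.posSemidef.sqrt)‖ ≤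
      ‖Matrix.toEuclideanCLM (𝕜 := ℝ) (U⁻¹ - V⁻¹)‖ /
        ⨅ i, (hV.inv.posSemidef.posSemidef_sqrt).1.eigenvalues i := by
  classical
  set A := hU.inv.posSemidef.sqrt with hAdef
  set B := hV.inv.posSemidef.sqrt with hBdef
  have hA : A.PosSemidef := hU.inv.posSemidef.posSemidef_sqrt
  have hB : B.PosSemidef := hV.inv.posSemidef.posSemidef_sqrt
  have hD : (A - B).IsHermitian := hA.1.sub hB.1
  show _ ≤ _ / ⨅ i, hB.1.eigenvalues i
  set c := ⨅ i, hB.1.eigenvalues i with hcdef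
  have hBpd : B.PosDef := posDef_sqrt hV.inv
  have hc_pos : 0 < c := by
    obtain ⟨j, hj⟩ := Finite.exists_min (fun i => hB.1.eigenvalues i)
    have hcj : c = hB.1.eigenvalues j :=
      le_antisymm (ciInf_le (Finite.bddBelow_range _) j) (le_ciInf hj)
    rw [hcj]
    exact hBpd.eigenvalues_pos j
  obtain ⟨j, hj⟩ := Finite.exists_max (fun i => |hD.eigenvalues i|)
  set v := ⇑(hD.eigenvectorBasis j) with hv
  have hbi : (WithLp.equiv 2 (n → ℝ)).symm v = hD.eigenvectorBasis j := rfl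
  have hvnorm : ‖hD.eigenvectorBasis j‖ = 1 := hD.eigenvectorBasis.orthonormal.1 j
  have hv1 : v ⬝ᵥ v = 1 := by
    have h := real_inner_self_eq_norm_sq (hD.eigenvectorBasis j)
    rw [hvnorm, one_pow, ← hbi, inner_symm_dot] at h
    exact h
  have hE : U⁻¹ - V⁻¹ = A * (A - B) + (A - B) * B := by
    have hA2 : A * A = U⁻¹ := sqrt_mul_self' hU.inv.posSemidef
    have hB2 : B * B = V⁻¹ := sqrt_mul_self' hV.inv.posSemidef
    rw [← hA2, ← hB2]
    noncomm_ring
  have hDv : (A - B) *ᵥ v = hD.eigenvalues j • v := hD.mulVec_eigenvectorBasis j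
  have key : v ⬝ᵥ ((U⁻¹ - V⁻¹) *ᵥ v) =
      hD.eigenvalues j * (v ⬝ᵥ (A *ᵥ v) + v ⬝ᵥ (B *ᵥ v)) := by
    rw [hE, add_mulVec, dotProduct_add, ← mulVec_mulVec, hDv, mulVec_smul, dotProduct_smul,
      ← mulVec_mulVec, dot_symm hD v (B *ᵥ v), hDv, smul_dotProduct]
    simp only [smul_eq_mul]
    ring
  have hAv : 0 ≤ v ⬝ᵥ (A *ᵥ v) := by simpa using hA.dotProduct_mulVec_nonneg v
  have hBv : c ≤ v ⬝ᵥ (B *ᵥ v) := by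
    have := iInf_le_dot hB v
    rwa [hv1, mul_one] at this
  have habs : |v ⬝ᵥ ((U⁻¹ - V⁻¹) *ᵥ v)| ≤ ‖Matrix.toEuclideanCLM (𝕜 := ℝ) (U⁻¹ - V⁻¹)‖ := by
    set TE := Matrix.toEuclideanCLM (𝕜 := ℝ) (U⁻¹ - V⁻¹) with hTE
    have h1 : v ⬝ᵥ ((U⁻¹ - V⁻¹) *ᵥ v) =
        (inner ℝ (hD.eigenvectorBasis j) (TE (hD.eigenvectorBasis j)) : ℝ) := by
      rw [← hbi, hTE, toEuclideanCLM_apply', inner_symm_dot]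
      simp [Matrix.toLin'_apply, Matrix.sub_mulVec, dotProduct_sub]
    rw [h1]
    calc |(inner ℝ (hD.eigenvectorBasis j) (TE (hD.eigenvectorBasis j)) : ℝ)|
        ≤ ‖hD.eigenvectorBasis j‖ * ‖TE (hD.eigenvectorBasis j)‖ := abs_real_inner_le_norm _ _
      _ ≤ ‖hD.eigenvectorBasis j‖ * (‖TE‖ * ‖hD.eigenvectorBasis j‖) := by
          exact mul_le_mul_of_nonneg_left (TE.le_opNorm _) (norm_nonneg _)
      _ = ‖TE‖ := by rw [hvnorm]; ring
  have hmul : |hD.eigenvalues j| * c ≤ ‖Matrix.toEuclideanCLM (𝕜 := ℝ) (U⁻¹ - V⁻¹)‖ := by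
    have h2 : |hD.eigenvalues j| * c ≤ |v ⬝ᵥ ((U⁻¹ - V⁻¹) *ᵥ v)| := by
      rw [key, abs_mul]
      have h3 : c ≤ |v ⬝ᵥ (A *ᵥ v) + v ⬝ᵥ (B *ᵥ v)| := by
        rw [abs_of_nonneg (by linarith)]
        linarith
      exact mul_le_mul_of_nonneg_left h3 (abs_nonneg _)
    exact h2.trans habs
  have hnorm : ‖Matrix.toEuclideanCLM (𝕜 := ℝ) (A - B)‖ ≤ |hD.eigenvalues j| :=
    opNorm_le_of_eigen hD (abs_nonneg _) hj
  rw [le_div_iff₀ hc_pos]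
  calc ‖Matrix.toEuclideanCLM (𝕜 := ℝ) (A - B)‖ * c ≤ |hD.eigenvalues j| * c :=
        mul_le_mul_of_nonneg_right hnorm hc_pos.le
    _ ≤ _ := hmul
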